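/- Let u : W → ℝ be upper semicontinuous on W = V × (a,b), bounded above by M, with infimum bound m > −∞ and b − a < 1, satisfying u_t ≤ 0 in the viscosity sense. Fix t₁ ∈ (a,b) and suppose v ∈ C^∞(V) satisfies u(x,t₁) < v(x) for all x ∈ V. Then u(x,t) < v(x) for all x ∈ V and t ∈ (t₁, b). -/

import Mathlib

open Topology

theorem usc_exists_max' {X : Type*} [TopologicalSpace X] {K : Set X} (hK : IsCompact K)
    (hne : K.Nonempty) {f : X → ℝ} (hf : UpperSemicontinuousOn f K) :
    ∃ x ∈ K, ∀ y ∈ K, f y ≤ f x := by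
  by_contra h
  push_neg at h
  choose! z hzK hzlt using h
  have hmem : ∀ x (hx : x ∈ K), {x' | f x' < f (z x)} ∈ 𝓝[K] x := fun x hx =>
    hf x hx _ (hzlt x hx)
  choose! U hUo hUx hUsub using fun x (hx : x ∈ K) => mem_nhdsWithin.1 (hmem x hx)
  obtain ⟨t, ht⟩ := hK.elim_nhds_subcover' (fun x _ => U x) (fun x hx => (hUo x hx).mem_nhds (hUx x hx))
  have htne : t.Nonempty := by
    obtain ⟨x0, hx0⟩ := hne
    obtain ⟨i, hi, -⟩ := Set.mem_iUnion₂.1 (ht hx0)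
    exact ⟨i, hi⟩
  obtain ⟨j, hjt, hjmax⟩ := t.exists_max_image (fun x => f (z x)) htne
  have hzjK : z ↑j ∈ K := hzK _ j.2
  obtain ⟨i, hit, hiU⟩ := Set.mem_iUnion₂.1 (ht hzjK)
  have h1 : f (z ↑j) < f (z ↑i) := hUsub i i.2 ⟨hiU, hzjK⟩
  exact absurd (hjmax i hit) (not_le.2 h1)

/-- Barrier comparison: if `u` is upper semicontinuous on `W = V × (a,b)` with `m ≤ u ≤ M`,
`b − a < 1`, `u_t ≤ 0` in the viscosity sense, `t₁ ∈ (a,b)` and `v` is a smooth function on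
`V` with `u(·,t₁) < v`, then `u(x,t) < v(x)` for all `x ∈ V` and `t ∈ (t₁,b)`. -/
theorem lt_smooth_barrier_of_viscosity_ut_nonpos {N : ℕ}
    (V : Set (Fin N → ℝ)) (hV : IsOpen V) (a b : ℝ) (hab : b - a < 1)
    (m M : ℝ) (u : (Fin N → ℝ) × ℝ → ℝ)
    (husc : UpperSemicontinuousOn u (V ×ˢ Set.Ioo a b))
    (hm : ∀ p ∈ V ×ˢ Set.Ioo a b, m ≤ u p)
    (hM : ∀ p ∈ V ×ˢ Set.Ioo a b, u p ≤ M)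
    (hvisc : ∀ p ∈ V ×ˢ Set.Ioo a b, ∀ φ : (Fin N → ℝ) × ℝ → ℝ, ContDiff ℝ (⊤ : ℕ∞) φ →
      IsLocalMax (fun q => u q - φ q) p → fderiv ℝ φ p (0, 1) ≤ 0)
    (t₁ : ℝ) (ht₁ : t₁ ∈ Set.Ioo a b)
    (v : (Fin N → ℝ) → ℝ) (hv : ContDiff ℝ (⊤ : ℕ∞) v)
    (hlt : ∀ x ∈ V, u (x, t₁) < v x) :
    ∀ x ∈ V, ∀ t ∈ Set.Ioo t₁ b, u (x, t) < v x := by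
  intro x₀ hx₀ t₀ ht₀
  by_contra hcon
  push_neg at hcon
  obtain ⟨hat₁, ht₁b⟩ := ht₁
  obtain ⟨ht₁0, ht₀b⟩ := ht₀
  obtain ⟨r, hr0, hrV⟩ : ∃ r > 0, Metric.closedBall x₀ r ⊆ V := by
    obtain ⟨ε, hε, hball⟩ := Metric.isOpen_iff.1 hV x₀ hx₀
    exact ⟨ε / 2, by linarith, (Metric.closedBall_subset_ball (by linarith)).trans hball⟩
  obtain ⟨t₂, ht₀2, ht₂b⟩ : ∃ t₂, t₀ < t₂ ∧ t₂ < b := ⟨(t₀ + b) / 2, by linarith, by linarith⟩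
  have ht₁2 : t₁ < t₂ := ht₁0.trans ht₀2
  set K : Set ((Fin N → ℝ) × ℝ) := Metric.closedBall x₀ r ×ˢ Set.Icc t₁ t₂ with hKdef
  have hKc : IsCompact K := (isCompact_closedBall _ _).prod isCompact_Icc
  have hKS : K ⊆ V ×ˢ Set.Ioo a b := by
    rintro ⟨x, t⟩ ⟨hx, ht⟩
    exact ⟨hrV hx, ⟨hat₁.trans_le ht.1, ht.2.trans_lt ht₂b⟩⟩
  have hx₀ball : x₀ ∈ Metric.closedBall x₀ r := Metric.mem_closedBall_self hr0.le
  have husc1 : UpperSemicontinuousOn (fun x => u (x, t₁)) (Metric.closedBall x₀ r) := by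
    intro x hx y hy
    have hx' : ((x : Fin N → ℝ), t₁) ∈ V ×ˢ Set.Ioo a b := ⟨hrV hx, ⟨hat₁, ht₁b⟩⟩
    have hev := husc (x, t₁) hx' y hy
    have htend : Filter.Tendsto (fun x' : Fin N → ℝ => (x', t₁))
        (𝓝[Metric.closedBall x₀ r] x) (𝓝[V ×ˢ Set.Ioo a b] (x, t₁)) := by
      rw [tendsto_nhdsWithin_iff]
      constructor
      · exact ((continuous_id.prodMk continuous_const).tendsto x).mono_left nhdsWithin_le_nhds
      · exact eventually_mem_nhdsWithin.mono fun x' hx' => ⟨hrV hx', ⟨hat₁, ht₁b⟩⟩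
    exact htend.eventually hev
  have hwusc : UpperSemicontinuousOn (fun x => u (x, t₁) + (-v x)) (Metric.closedBall x₀ r) :=
    husc1.add (hv.continuous.neg.continuousOn.upperSemicontinuousOn)
  obtain ⟨η, hη0, hbot⟩ : ∃ η > 0, ∀ x ∈ Metric.closedBall x₀ r, u (x, t₁) - v x ≤ -η := by
    obtain ⟨xη, hxηK, hxη⟩ := usc_exists_max' (isCompact_closedBall x₀ r) ⟨x₀, hx₀ball⟩ hwusc
    refine ⟨-(u (xη, t₁) + (-v xη)), by linarith [hlt xη (hrV hxηK)], fun x hx => ?_⟩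
    have := hxη x hx
    linarith
  obtain ⟨ε, hε0, hεη, hε1⟩ : ∃ ε, 0 < ε ∧ ε ≤ η ∧ ε ≤ 1 :=
    ⟨min η 1, lt_min hη0 one_pos, min_le_left _ _, min_le_right _ _⟩
  obtain ⟨B, hB⟩ : ∃ B, ∀ x ∈ Metric.closedBall x₀ r, -v x ≤ B := by
    obtain ⟨xB, hxBK, hxB⟩ := (isCompact_closedBall x₀ r).exists_isMaxOn ⟨x₀, hx₀ball⟩
      (hv.continuous.neg.continuousOn)
    exact ⟨-v xB, fun x hx => hxB hx⟩
  obtain ⟨C, hC0, hCr⟩ : ∃ C, 0 ≤ C ∧ M + 1 + B ≤ C * r ^ 2 := by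
    refine ⟨max 0 (M + 1 + B) / r ^ 2, div_nonneg (le_max_left _ _) (by positivity), ?_⟩
    rw [div_mul_cancel₀ _ (by positivity : (r:ℝ) ^ 2 ≠ 0)]
    exact le_max_right _ _
  have hmM : m ≤ M := (hm (x₀, t₁) ⟨hx₀, hat₁, ht₁b⟩).trans (hM (x₀, t₁) ⟨hx₀, hat₁, ht₁b⟩)
  obtain ⟨δ, hδ0, hδt⟩ : ∃ δ, 0 < δ ∧ δ * (t₀ - t₁) = ε / 2 := by
    have hne : t₀ - t₁ ≠ 0 := sub_ne_zero.2 ht₁0.ne'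
    refine ⟨ε / (2 * (t₀ - t₁)), div_pos hε0 (by linarith), ?_⟩
    rw [div_mul_eq_mul_div, mul_comm (2:ℝ) (t₀ - t₁), mul_comm ε (t₀ - t₁)]
    exact mul_div_mul_left _ _ hne
  obtain ⟨k, A, hA0, hA2, hA0'⟩ :
      ∃ (k : ℕ) (A : ℝ), 0 < A ∧ M - m + 1 ≤ A * (t₂ - t₁) ^ k ∧ A * (t₀ - t₁) ^ k < ε / 4 := by
    obtain ⟨k, hk⟩ : ∃ k : ℕ, (M - m + 1) * ((t₀ - t₁) / (t₂ - t₁)) ^ k < ε / 4 := by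
      have hρ0 : (0:ℝ) ≤ (t₀ - t₁) / (t₂ - t₁) := by apply div_nonneg <;> linarith
      have hρ1 : (t₀ - t₁) / (t₂ - t₁) < 1 := by rw [div_lt_one (by linarith)]; linarith
      have h1 : Filter.Tendsto (fun k : ℕ => (M - m + 1) * ((t₀ - t₁) / (t₂ - t₁)) ^ k)
          Filter.atTop (𝓝 0) := by
        have := (tendsto_pow_atTop_nhds_zero_of_lt_one hρ0 hρ1).const_mul (M - m + 1)
        simpa using this
      exact (h1.eventually_lt_const (by positivity : (0:ℝ) < ε / 4)).exists
    have ht₂₁k : (0:ℝ) < (t₂ - t₁) ^ k := pow_pos (by linarith) k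
    refine ⟨k, (M - m + 1) / (t₂ - t₁) ^ k, div_pos (by linarith) ht₂₁k,
      (div_mul_cancel₀ _ ht₂₁k.ne').ge, ?_⟩
    have hrw : (M - m + 1) / (t₂ - t₁) ^ k * (t₀ - t₁) ^ k
        = (M - m + 1) * ((t₀ - t₁) / (t₂ - t₁)) ^ k := by
      rw [div_pow]; ring
    rw [hrw]; exact hk
  set Q : (Fin N → ℝ) → ℝ := fun x => ∑ i, (x i - x₀ i) ^ 2 with hQdef
  have hQ0 : ∀ x, 0 ≤ Q x := fun x => Finset.sum_nonneg fun i _ => sq_nonneg _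
  have hQx₀ : Q x₀ = 0 := by simp [hQdef]
  have hQr : ∀ x, r ≤ dist x x₀ → r ^ 2 ≤ Q x := by
    intro x hx
    have h1 : ‖x - x₀‖ ≤ Real.sqrt (Q x) := by
      rw [pi_norm_le_iff_of_nonneg (Real.sqrt_nonneg _)]
      intro i
      have h2 : (x i - x₀ i) ^ 2 ≤ Q x :=
        Finset.single_le_sum (f := fun i => (x i - x₀ i) ^ 2) (fun i _ => sq_nonneg _)
          (Finset.mem_univ i)
      have h3 : ‖(x - x₀) i‖ = Real.sqrt ((x i - x₀ i) ^ 2) := by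
        rw [Real.sqrt_sq_eq_abs, Real.norm_eq_abs, Pi.sub_apply]
      rw [h3]
      exact Real.sqrt_le_sqrt h2
    have h3 : r ≤ Real.sqrt (Q x) := by
      rw [dist_eq_norm] at hx
      exact hx.trans h1
    calc r ^ 2 ≤ Real.sqrt (Q x) ^ 2 := by
          apply pow_le_pow_left₀ hr0.le h3
      _ = Q x := Real.sq_sqrt (hQ0 x)
  set g : ℝ → ℝ := fun t => δ * (t - t₁) + A * (t - t₁) ^ k with hgdef
  set φ : (Fin N → ℝ) × ℝ → ℝ := fun p => v p.1 + C * Q p.1 + g p.2 with hφdef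
  have hgval : ∀ t, g t = δ * (t - t₁) + A * (t - t₁) ^ k := fun t => rfl
  have hφval : ∀ p : (Fin N → ℝ) × ℝ, φ p = v p.1 + C * Q p.1 + g p.2 := fun p => rfl
  have hQc : ContDiff ℝ (⊤ : ℕ∞) Q :=
    ContDiff.sum fun i _ =>
      (((ContinuousLinearMap.proj i : (Fin N → ℝ) →L[ℝ] ℝ).contDiff).sub contDiff_const).pow 2
  have hgc : ContDiff ℝ (⊤ : ℕ∞) g :=
    (contDiff_const.mul (contDiff_id.sub contDiff_const)).add
      (contDiff_const.mul ((contDiff_id.sub contDiff_const).pow k))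
  have hφc : ContDiff ℝ (⊤ : ℕ∞) φ :=
    ((hv.comp contDiff_fst).add (contDiff_const.mul (hQc.comp contDiff_fst))).add
      (hgc.comp contDiff_snd)
  have hgnn : ∀ t, t₁ ≤ t → 0 ≤ g t := by
    intro t ht
    have h1 : 0 ≤ t - t₁ := by linarith
    have h2 : (0:ℝ) ≤ A * (t - t₁) ^ k := mul_nonneg hA0.le (by positivity)
    have h3 : 0 ≤ δ * (t - t₁) := mul_nonneg hδ0.le h1
    rw [hgval]; linarith
  have hφderiv : ∀ p : (Fin N → ℝ) × ℝ, HasFDerivAt φ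
      ((fderiv ℝ (fun x => v x + C * Q x) p.1).comp (ContinuousLinearMap.fst ℝ (Fin N → ℝ) ℝ) +
        ((1 : ℝ →L[ℝ] ℝ).smulRight (δ + A * (↑k * (p.2 - t₁) ^ (k - 1)))).comp
          (ContinuousLinearMap.snd ℝ (Fin N → ℝ) ℝ)) p := by
    intro p
    have hfc : ContDiff ℝ (⊤ : ℕ∞) (fun x => v x + C * Q x) := hv.add (contDiff_const.mul hQc)
    have hgd : HasDerivAt g (δ + A * (↑k * (p.2 - t₁) ^ (k - 1))) p.2 := by
      have h1 : HasDerivAt (fun t : ℝ => t - t₁) 1 p.2 := (hasDerivAt_id p.2).sub_const t₁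
      have h2 : HasDerivAt (fun t : ℝ => δ * (t - t₁)) (δ * 1) p.2 := h1.const_mul δ
      have h3 : HasDerivAt (fun t : ℝ => (t - t₁) ^ k) (↑k * (p.2 - t₁) ^ (k - 1) * 1) p.2 :=
        h1.pow k
      have h5 := h2.add (h3.const_mul A)
      exact h5.congr_deriv (by ring)
    have hf1 : HasFDerivAt (fun q : (Fin N → ℝ) × ℝ => v q.1 + C * Q q.1)
        ((fderiv ℝ (fun x => v x + C * Q x) p.1).comp (ContinuousLinearMap.fst ℝ (Fin N → ℝ) ℝ))
        p := ((hfc.differentiable (by simp) p.1).hasFDerivAt).comp p hasFDerivAt_fst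
    have hf2 : HasFDerivAt (fun q : (Fin N → ℝ) × ℝ => g q.2)
        (((1 : ℝ →L[ℝ] ℝ).smulRight (δ + A * (↑k * (p.2 - t₁) ^ (k - 1)))).comp
          (ContinuousLinearMap.snd ℝ (Fin N → ℝ) ℝ)) p :=
      (hgd.hasFDerivAt).comp p hasFDerivAt_snd
    exact hf1.add hf2
  clear_value Q g φ
  have hFusc : UpperSemicontinuousOn (fun p => u p + (-φ p)) K :=
    (husc.mono hKS).add (hφc.continuous.neg.continuousOn.upperSemicontinuousOn)
  have hq₀K : ((x₀ : Fin N → ℝ), t₀) ∈ K := ⟨hx₀ball, ⟨ht₁0.le, ht₀2.le⟩⟩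
  obtain ⟨p', hpK, hpmax⟩ := usc_exists_max' hKc ⟨_, hq₀K⟩ hFusc
  obtain ⟨x', t'⟩ := p'
  have hx'K : x' ∈ Metric.closedBall x₀ r := hpK.1
  have ht'K : t' ∈ Set.Icc t₁ t₂ := hpK.2
  have hval : -(3 * ε / 4) < u (x', t') - φ (x', t') := by
    have h1 : u (x₀, t₀) + -φ (x₀, t₀) ≤ u (x', t') + -φ (x', t') := hpmax _ hq₀K
    have h2 : φ (x₀, t₀) = v x₀ + g t₀ := by
      rw [hφval]; simp [hQx₀]
    have h3 : g t₀ < 3 * ε / 4 := by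
      rw [hgval, hδt]; linarith [hA0']
    have h4 : v x₀ ≤ u (x₀, t₀) := hcon
    linarith
  have hvm : ∀ x ∈ Metric.closedBall x₀ r, m < v x := fun x hx =>
    lt_of_le_of_lt (hm (x, t₁) ⟨hrV hx, hat₁, ht₁b⟩) (hlt x (hrV hx))
  have hCQ0 : 0 ≤ C * Q x' := mul_nonneg hC0 (hQ0 x')
  have hgt' : 0 ≤ g t' := hgnn t' ht'K.1
  have hφv : φ (x', t') = v x' + C * Q x' + g t' := hφval _
  -- exclude t' = t₁
  have ht'1 : t₁ < t' := by
    rcases eq_or_lt_of_le ht'K.1 with h | h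
    · exfalso
      have hb := hbot x' hx'K
      rw [← h] at hval
      rw [← h] at hφv
      rw [← h] at hgt'
      linarith
    · exact h
  -- exclude t' = t₂
  have ht'2 : t' < t₂ := by
    rcases lt_or_eq_of_le ht'K.2 with h | h
    · exact h
    · exfalso
      have hu : u (x', t') ≤ M := hM _ (hKS ⟨hx'K, ht'K⟩)
      have hg2 : M - m + 1 ≤ g t' := by
        rw [hgval, h]
        have h5 : 0 ≤ δ * (t₂ - t₁) := mul_nonneg hδ0.le (by linarith)
        linarith [hA2]
      have hv' : m < v x' := hvm x' hx'K
      linarith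
  -- exclude lateral boundary
  have hx'b : dist x' x₀ < r := by
    rcases lt_or_ge (dist x' x₀) r with h | h
    · exact h
    · exfalso
      have hu : u (x', t') ≤ M := hM _ (hKS ⟨hx'K, ht'K⟩)
      have hQ : r ^ 2 ≤ Q x' := hQr x' h
      have hCQ : C * r ^ 2 ≤ C * Q x' := mul_le_mul_of_nonneg_left hQ hC0
      have hBx : -v x' ≤ B := hB x' hx'K
      linarith
  have hpS : ((x' : Fin N → ℝ), t') ∈ V ×ˢ Set.Ioo a b := hKS ⟨hx'K, ht'K⟩
  have hloc : IsLocalMax (fun q => u q - φ q) (x', t') := by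
    have hUo : IsOpen (Metric.ball x₀ r ×ˢ Set.Ioo t₁ t₂) := Metric.isOpen_ball.prod isOpen_Ioo
    have hpU : ((x' : Fin N → ℝ), t') ∈ Metric.ball x₀ r ×ˢ Set.Ioo t₁ t₂ :=
      ⟨Metric.mem_ball.2 hx'b, ⟨ht'1, ht'2⟩⟩
    filter_upwards [hUo.mem_nhds hpU] with q hq
    have hqK : q ∈ K := ⟨Metric.ball_subset_closedBall hq.1, Set.Ioo_subset_Icc_self hq.2⟩
    have h6 : u q + -φ q ≤ u (x', t') + -φ (x', t') := hpmax q hqK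
    simp only [sub_eq_add_neg]
    linarith
  have hfd := hvisc (x', t') hpS φ hφc hloc
  rw [(hφderiv (x', t')).fderiv] at hfd
  simp only [ContinuousLinearMap.add_apply, ContinuousLinearMap.comp_apply,
    ContinuousLinearMap.coe_fst', ContinuousLinearMap.coe_snd',
    ContinuousLinearMap.smulRight_apply, ContinuousLinearMap.one_apply, map_zero,
    smul_eq_mul, one_mul, zero_add] at hfd
  have hd0 : 0 < δ + A * (↑k * (t' - t₁) ^ (k - 1)) := by
    have h1 : (0:ℝ) ≤ (t' - t₁) ^ (k - 1) := pow_nonneg (by linarith) _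
    have h2 : (0:ℝ) ≤ A * (↑k * (t' - t₁) ^ (k - 1)) :=
      mul_nonneg hA0.le (mul_nonneg (Nat.cast_nonneg k) h1)
    linarith
  linarith
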